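/- arXiv:2106.09770 — 3 statements merged into one kernel-verified Lean document; each statement's English description precedes it below -/
import Mathlib

section
/- Let M, n be positive integers, H an M×n complex matrix, h ∈ ℂᴹ, and N > 0 a real number. Suppose (u_d)_{d=1,…,n} is an orthonormal basis of ℂⁿ with (Hᴴ H) u_d = λ_d u_d where λ_d ≥ 0 are real. Let b = Hᴴ h and c_d = ⟨u_d, b⟩. Suppose γ ∈ ℝ satisfies γ > λ_d for all d and Σ_{d=1}^{n} |c_d|² / (γ − λ_d)² = N. Define φ* = Σ_{d=1}^{n} (c_d / (γ − λ_d)) u_d. Then ‖φ*‖² = N, and for every φ ∈ ℂⁿ with ‖φ‖² ≤ N one has ‖h + Hφ‖² ≤ ‖h + Hφ*‖². That is, φ* is a global maximizer of ‖h + Hφ‖² over the ball {φ : ‖φ‖² ≤ N}. -/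
/-!
The point `φ*` is a critical point of the Lagrangian `‖h + Hφ‖² - γ‖φ‖²`: in the eigenbasis one
checks `Hᴴ(h + Hφ*) = γ φ*`. Since every eigenvalue of `HᴴH` is below `γ`, we have
`‖Hy‖² ≤ γ‖y‖²`, so the Lagrangian is concave and `φ*` maximizes it. Writing `φ = φ* + e`, this
gives `‖h + Hφ‖² ≤ ‖h + Hφ*‖² + γ (‖φ‖² - ‖φ*‖²)`, and the last term is `≤ 0` on the ball of
radius `‖φ*‖`. Parseval in the eigenbasis gives `‖φ*‖² = N`.
-/

open scoped InnerProductSpace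
open Matrix RCLike WithLp

section InnerProductSpace

variable {𝕜 E F : Type*} [RCLike 𝕜] [NormedAddCommGroup E] [InnerProductSpace 𝕜 E]
  [NormedAddCommGroup F] [InnerProductSpace 𝕜 F]

theorem norm_add_apply_le_of_inner_apply_eq_inner_smul (T : E →ₗ[𝕜] F) (h : F) {γ : ℝ} {xs : E}
    (hT : ∀ y, ‖T y‖ ^ 2 ≤ γ * ‖y‖ ^ 2)
    (hstat : ∀ y, ⟪T y, h + T xs⟫_𝕜 = ⟪y, (γ : 𝕜) • xs⟫_𝕜) {x : E} (hx : ‖x‖ ≤ ‖xs‖) :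
    ‖h + T x‖ ≤ ‖h + T xs‖ := by
  set e := x - xs
  have hxe : x = xs + e := by simp [e]
  have hcross : re ⟪h + T xs, T e⟫_𝕜 = γ * re ⟪xs, e⟫_𝕜 := by
    rw [← inner_conj_symm, hstat, inner_conj_symm, inner_smul_left, conj_ofReal, re_ofReal_mul]
  have hobj : ‖h + T x‖ ^ 2 = ‖h + T xs‖ ^ 2 + 2 * γ * re ⟪xs, e⟫_𝕜 + ‖T e‖ ^ 2 := by
    rw [hxe, map_add, ← add_assoc, @norm_add_sq 𝕜, hcross]; ring
  have hnorm : ‖x‖ ^ 2 = ‖xs‖ ^ 2 + 2 * re ⟪xs, e⟫_𝕜 + ‖e‖ ^ 2 := by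
    rw [hxe, @norm_add_sq 𝕜]
  have hγ : γ * ‖x‖ ^ 2 ≤ γ * ‖xs‖ ^ 2 := by
    have hxs : 0 ≤ γ * ‖xs‖ ^ 2 := (sq_nonneg _).trans (hT xs)
    have hsq : ‖x‖ ^ 2 ≤ ‖xs‖ ^ 2 := pow_le_pow_left₀ (norm_nonneg x) hx 2
    rcases le_or_gt 0 γ with hγ | hγ
    · exact mul_le_mul_of_nonneg_left hsq hγ
    · nlinarith [sq_nonneg ‖x‖]
  have hTe := hT e
  have hsq : ‖h + T x‖ ^ 2 ≤ ‖h + T xs‖ ^ 2 + γ * (‖x‖ ^ 2 - ‖xs‖ ^ 2) := by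
    rw [hobj, hnorm]; nlinarith
  exact (pow_le_pow_iff_left₀ (norm_nonneg _) (norm_nonneg _) two_ne_zero).mp (by linarith)

theorem OrthonormalBasis.norm_sum_smul_sq {ι : Type*} [Fintype ι] (b : OrthonormalBasis ι 𝕜 E)
    (a : ι → 𝕜) : ‖∑ i, a i • b i‖ ^ 2 = ∑ i, ‖a i‖ ^ 2 := by
  rw [← EuclideanSpace.norm_sq_eq (toLp 2 a), ← b.repr.symm.norm_map, ← b.sum_repr_symm]

theorem OrthonormalBasis.re_inner_self_apply_le {ι : Type*} [Fintype ι]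
    (b : OrthonormalBasis ι 𝕜 E) (A : E →ₗ[𝕜] E) {lam : ι → ℝ}
    (hA : ∀ i, A (b i) = (lam i : 𝕜) • b i) {γ : ℝ} (hγ : ∀ i, lam i ≤ γ) (y : E) :
    re ⟪y, A y⟫_𝕜 ≤ γ * ‖y‖ ^ 2 := by
  have hAy : A y = ∑ i, ((lam i : 𝕜) * ⟪b i, y⟫_𝕜) • b i := by
    conv_lhs => rw [← b.sum_repr' y]
    simp only [map_sum, map_smul, hA, smul_smul, mul_comm]
  have hquad : re ⟪y, A y⟫_𝕜 = ∑ i, lam i * ‖⟪b i, y⟫_𝕜‖ ^ 2 := by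
    rw [hAy, inner_sum, map_sum]
    refine Finset.sum_congr rfl fun i _ => ?_
    rw [inner_smul_right, ← inner_conj_symm y (b i), mul_assoc, mul_conj, ← ofReal_pow,
      ← ofReal_mul, ofReal_re]
  rw [hquad, ← b.sum_sq_norm_inner_right y, Finset.mul_sum]
  exact Finset.sum_le_sum fun i _ => mul_le_mul_of_nonneg_right (hγ i) (sq_nonneg _)

variable [FiniteDimensional 𝕜 E] [FiniteDimensional 𝕜 F]

theorem OrthonormalBasis.adjoint_apply_add_eq_smul {ι : Type*} [Fintype ι]
    (b : OrthonormalBasis ι 𝕜 E) (T : E →ₗ[𝕜] F) {lam : ι → ℝ}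
    (hT : ∀ i, T.adjoint (T (b i)) = (lam i : 𝕜) • b i) {γ : ℝ} (hγ : ∀ i, lam i ≠ γ) {h : F}
    {c : ι → 𝕜} (hc : ∀ i, c i = ⟪b i, T.adjoint h⟫_𝕜) {xs : E}
    (hxs : xs = ∑ i, (c i / ((γ : 𝕜) - lam i)) • b i) :
    T.adjoint (h + T xs) = (γ : 𝕜) • xs := by
  have hh : T.adjoint h = ∑ i, c i • b i := by simp_rw [hc]; exact (b.sum_repr' _).symm
  rw [map_add, hh, hxs]
  simp only [map_sum, map_smul, hT, Finset.smul_sum, smul_smul, ← Finset.sum_add_distrib,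
    ← add_smul]
  refine Finset.sum_congr rfl fun i _ => ?_
  have hne : (γ : 𝕜) - lam i ≠ 0 := sub_ne_zero.mpr (by exact_mod_cast (hγ i).symm)
  congr 1
  field_simp
  ring

theorem OrthonormalBasis.norm_add_apply_le {ι : Type*} [Fintype ι]
    (b : OrthonormalBasis ι 𝕜 E) (T : E →ₗ[𝕜] F) {lam : ι → ℝ}
    (hT : ∀ i, T.adjoint (T (b i)) = (lam i : 𝕜) • b i) {γ : ℝ} (hγ : ∀ i, lam i < γ) {h : F}
    {c : ι → 𝕜} (hc : ∀ i, c i = ⟪b i, T.adjoint h⟫_𝕜) {xs : E}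
    (hxs : xs = ∑ i, (c i / ((γ : 𝕜) - lam i)) • b i) {x : E} (hx : ‖x‖ ≤ ‖xs‖) :
    ‖h + T x‖ ≤ ‖h + T xs‖ := by
  refine norm_add_apply_le_of_inner_apply_eq_inner_smul T h (γ := γ) (fun y => ?_) (fun y => ?_)
    hx
  · rw [← inner_self_eq_norm_sq (𝕜 := 𝕜), ← T.adjoint_inner_right]
    exact b.re_inner_self_apply_le (T.adjoint ∘ₗ T) hT (fun i => (hγ i).le) y
  · rw [← T.adjoint_inner_right, b.adjoint_apply_add_eq_smul T hT (fun i => (hγ i).ne) hc hxs]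

noncomputable def Orthonormal.toOrthonormalBasis {ι : Type*} [Fintype ι] {v : ι → E}
    (hv : Orthonormal 𝕜 v) (hcard : Fintype.card ι = Module.finrank 𝕜 E) :
    OrthonormalBasis ι 𝕜 E :=
  .mk hv (hv.linearIndependent.span_eq_top_of_card_eq_finrank' hcard).ge

@[simp]
theorem Orthonormal.coe_toOrthonormalBasis {ι : Type*} [Fintype ι] {v : ι → E}
    (hv : Orthonormal 𝕜 v) (hcard : Fintype.card ι = Module.finrank 𝕜 E) :
    ⇑(hv.toOrthonormalBasis hcard) = v :=
  OrthonormalBasis.coe_mk hv _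

end InnerProductSpace

theorem EuclideanSpace.orthonormal_toLp_iff {𝕜 ι : Type*} [RCLike 𝕜] [Fintype ι] [DecidableEq ι]
    {u : ι → ι → 𝕜} :
    Orthonormal 𝕜 (fun i => toLp 2 (u i)) ↔
      ∀ i j, ∑ k, star (u i k) * u j k = if i = j then 1 else 0 := by
  simp only [orthonormal_iff_ite, EuclideanSpace.inner_toLp_toLp, dotProduct, Pi.star_apply,
    mul_comm]

theorem stmt1_general {M n : ℕ}
    (H : Matrix (Fin M) (Fin n) ℂ) (h : Fin M → ℂ) (N : ℝ)
    (u : Fin n → Fin n → ℂ) (lam : Fin n → ℝ)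
    (horth : ∀ d d', (∑ i, star (u d i) * u d' i) = if d = d' then 1 else 0)
    (heig : ∀ d, (Hᴴ * H).mulVec (u d) = (lam d : ℂ) • u d)
    (b : Fin n → ℂ) (hb : b = Hᴴ.mulVec h)
    (c : Fin n → ℂ) (hc : ∀ d, c d = ∑ i, star (u d i) * b i)
    (γ : ℝ) (hγ : ∀ d, lam d < γ)
    (hroot : (∑ d, ‖c d‖ ^ 2 / (γ - lam d) ^ 2) = N)
    (φs : Fin n → ℂ) (hφs : φs = ∑ d, (c d / ((γ : ℂ) - (lam d : ℂ))) • u d) :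
    (∑ i, ‖φs i‖ ^ 2) = N ∧
      ∀ φ : Fin n → ℂ, (∑ i, ‖φ i‖ ^ 2) ≤ N →
        (∑ a, ‖h a + H.mulVec φ a‖ ^ 2) ≤ ∑ a, ‖h a + H.mulVec φs a‖ ^ 2 := by
  set T := toEuclideanLin H
  set U := (EuclideanSpace.orthonormal_toLp_iff.mpr horth).toOrthonormalBasis (by simp)
  have hU : ∀ d, U d = toLp 2 (u d) := fun d => by simp [U]
  have heigU : ∀ d, T.adjoint (T (U d)) = (lam d : ℂ) • U d := fun d => by
    rw [hU, ← toEuclideanLin_conjTranspose_eq_adjoint]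
    simp [T, mulVec_mulVec, heig]
  have hcU : ∀ d, c d = ⟪U d, T.adjoint (toLp 2 h)⟫_ℂ := fun d => by
    rw [hc, hb, hU, ← toEuclideanLin_conjTranspose_eq_adjoint]
    simp [EuclideanSpace.inner_toLp_toLp, dotProduct, mul_comm]
  have hφsU : toLp 2 φs = ∑ d, (c d / ((γ : ℂ) - lam d)) • U d := by
    simp [hφs, hU]
  have hnorm : ∀ x : Fin n → ℂ, ∑ i, ‖x i‖ ^ 2 = ‖toLp 2 x‖ ^ 2 := fun x =>
    (EuclideanSpace.norm_sq_eq _).symm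
  have hobj : ∀ φ : Fin n → ℂ, ∑ a, ‖h a + H.mulVec φ a‖ ^ 2 = ‖toLp 2 h + T (toLp 2 φ)‖ ^ 2 :=
    fun φ => by rw [EuclideanSpace.norm_sq_eq]; rfl
  have hφs_norm : ‖toLp 2 φs‖ ^ 2 = N := by
    rw [hφsU, U.norm_sum_smul_sq, ← hroot]
    refine Finset.sum_congr rfl fun d _ => ?_
    rw [norm_div, div_pow, ← Complex.ofReal_sub, Complex.norm_real, Real.norm_eq_abs, sq_abs]
  refine ⟨(hnorm φs).trans hφs_norm, fun φ hφ => ?_⟩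
  rw [hobj, hobj]
  refine pow_le_pow_left₀ (norm_nonneg _) (U.norm_add_apply_le T heigU hγ hcU hφsU ?_) 2
  rw [hnorm, ← hφs_norm] at hφ
  exact (pow_le_pow_iff_left₀ (norm_nonneg _) (norm_nonneg _) two_ne_zero).mp hφ

/-- Given an orthonormal eigenbasis `u` of `Hᴴ H` with nonnegative eigenvalues
`lam`, `b = Hᴴ h`, `c d = ⟨u d, b⟩`, and `γ` with `γ > lam d` for all `d` satisfying
`∑ d, |c d|² / (γ - lam d)² = N`, the point `φs = ∑ d, (c d / (γ - lam d)) • u d` satisfies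
`‖φs‖² = N` and is a global maximizer of `‖h + H φ‖²` over the ball `‖φ‖² ≤ N`. -/
theorem stmt1 {M n : ℕ} (hM : 0 < M) (hn : 0 < n)
    (H : Matrix (Fin M) (Fin n) ℂ) (h : Fin M → ℂ) (N : ℝ) (hN : 0 < N)
    (u : Fin n → Fin n → ℂ) (lam : Fin n → ℝ)
    (horth : ∀ d d', (∑ i, star (u d i) * u d' i) = if d = d' then 1 else 0)
    (heig : ∀ d, (Hᴴ * H).mulVec (u d) = (lam d : ℂ) • u d)
    (hlam : ∀ d, 0 ≤ lam d)
    (b : Fin n → ℂ) (hb : b = Hᴴ.mulVec h)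
    (c : Fin n → ℂ) (hc : ∀ d, c d = ∑ i, star (u d i) * b i)
    (γ : ℝ) (hγ : ∀ d, lam d < γ)
    (hroot : (∑ d, ‖c d‖ ^ 2 / (γ - lam d) ^ 2) = N)
    (φs : Fin n → ℂ) (hφs : φs = ∑ d, (c d / ((γ : ℂ) - (lam d : ℂ))) • u d) :
    (∑ i, ‖φs i‖ ^ 2) = N ∧
      ∀ φ : Fin n → ℂ, (∑ i, ‖φ i‖ ^ 2) ≤ N →
        (∑ a, ‖h a + H.mulVec φ a‖ ^ 2) ≤ ∑ a, ‖h a + H.mulVec φs a‖ ^ 2 :=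
  stmt1_general H h N u lam horth heig b hb c hc γ hγ hroot φs hφs
end

section
/- Let n be a positive integer, λ_1, …, λ_n ≥ 0 and c_1, …, c_n ≥ 0 real numbers, and N > 0. Suppose γ ∈ ℝ satisfies γ > λ_d for all d and Σ_{d=1}^{n} c_d² / (γ − λ_d)² = N. Define α* ∈ ℝⁿ by α*_d = c_d / (γ − λ_d). Then α*_d ≥ 0 for all d, Σ_d (α*_d)² = N, and for every α ∈ ℝⁿ with α_d ≥ 0 for all d and Σ_d α_d² ≤ N one has Σ_{d=1}^{n} (λ_d α_d² + 2 α_d c_d) ≤ Σ_{d=1}^{n} (λ_d (α*_d)² + 2 α*_d c_d). -/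
open scoped BigOperators

/-- With `lam d ≥ 0`, `c d ≥ 0`, `N > 0`, and `γ > lam d` for all `d`
satisfying `∑ d, c d ² / (γ - lam d)² = N`, the point `αs d = c d / (γ - lam d)` is
nonnegative, lies on the sphere `∑ d, αs d ² = N`, and globally maximizes
`∑ d, (lam d * α d ² + 2 * α d * c d)` over nonnegative `α` in the ball `∑ d, α d ² ≤ N`. -/
theorem stmt3 {n : ℕ} (hn : 0 < n) (lam c : Fin n → ℝ)
    (hlam : ∀ d, 0 ≤ lam d) (hc : ∀ d, 0 ≤ c d)
    (N : ℝ) (hN : 0 < N)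
    (γ : ℝ) (hγ : ∀ d, lam d < γ)
    (hroot : (∑ d, (c d) ^ 2 / (γ - lam d) ^ 2) = N)
    (αs : Fin n → ℝ) (hαs : ∀ d, αs d = c d / (γ - lam d)) :
    (∀ d, 0 ≤ αs d) ∧ (∑ d, (αs d) ^ 2) = N ∧
      ∀ α : Fin n → ℝ, (∀ d, 0 ≤ α d) → (∑ d, (α d) ^ 2) ≤ N →
        (∑ d, (lam d * (α d) ^ 2 + 2 * α d * c d)) ≤
          ∑ d, (lam d * (αs d) ^ 2 + 2 * αs d * c d) := by
  have hpos : ∀ d, 0 < γ - lam d := fun d => sub_pos.mpr (hγ d)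
  have hγ0 : 0 ≤ γ := le_of_lt (lt_of_le_of_lt (hlam ⟨0, hn⟩) (hγ ⟨0, hn⟩))
  have hαsnn : ∀ d, 0 ≤ αs d := fun d => by
    rw [hαs d]; exact div_nonneg (hc d) (le_of_lt (hpos d))
  have hsq : ∀ d, (αs d) ^ 2 = (c d) ^ 2 / (γ - lam d) ^ 2 := fun d => by
    rw [hαs d, div_pow]
  have hsphere : (∑ d, (αs d) ^ 2) = N := by
    rw [← hroot]; exact Finset.sum_congr rfl fun d _ => hsq d
  refine ⟨hαsnn, hsphere, fun α hα hball => ?_⟩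
  -- key pointwise inequality: lam α² + 2αc ≤ γ α² + c²/(γ-lam), equality at αs
  have key : ∀ d (x : ℝ), lam d * x ^ 2 + 2 * x * c d ≤ γ * x ^ 2 + (c d) ^ 2 / (γ - lam d) := by
    intro d x
    have h := hpos d
    have h2 : 0 ≤ (γ - lam d) * (x - c d / (γ - lam d)) ^ 2 :=
      mul_nonneg h.le (sq_nonneg _)
    have hne : γ - lam d ≠ 0 := ne_of_gt h
    have expand : (γ - lam d) * (x - c d / (γ - lam d)) ^ 2 =
        γ * x ^ 2 + (c d) ^ 2 / (γ - lam d) - (lam d * x ^ 2 + 2 * x * c d) := by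
      field_simp
      ring
    linarith [expand ▸ h2]
  have keyeq' : ∀ d, lam d * (αs d) ^ 2 + 2 * αs d * c d =
      γ * (αs d) ^ 2 + (c d) ^ 2 / (γ - lam d) := by
    intro d
    have hne : γ - lam d ≠ 0 := ne_of_gt (hpos d)
    rw [hαs d]
    field_simp
    ring
  calc (∑ d, (lam d * (α d) ^ 2 + 2 * α d * c d))
      ≤ ∑ d, (γ * (α d) ^ 2 + (c d) ^ 2 / (γ - lam d)) :=
        Finset.sum_le_sum fun d _ => key d (α d)
    _ = γ * (∑ d, (α d) ^ 2) + ∑ d, (c d) ^ 2 / (γ - lam d) := by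
        rw [Finset.sum_add_distrib, Finset.mul_sum]
    _ ≤ γ * N + ∑ d, (c d) ^ 2 / (γ - lam d) := by
        gcongr
    _ = γ * (∑ d, (αs d) ^ 2) + ∑ d, (c d) ^ 2 / (γ - lam d) := by rw [hsphere]
    _ = ∑ d, (γ * (αs d) ^ 2 + (c d) ^ 2 / (γ - lam d)) := by
        rw [Finset.sum_add_distrib, Finset.mul_sum]
    _ = ∑ d, (lam d * (αs d) ^ 2 + 2 * αs d * c d) :=
        Finset.sum_congr rfl fun d _ => (keyeq' d).symm
end

section
/- Let B, C, D ∈ ℝ and σ_φ, σ_θ > 0. Define σ̃² = σ_φ² / (1 + C² σ_φ² σ_θ²). Then the iterated integral of exp(i B δ + i (C δ + D) ε) with respect to the centered Gaussian measure of variance σ_θ² in ε and the centered Gaussian measure of variance σ_φ² in δ satisfies: ∫_ℝ ∫_ℝ exp(i B δ + i (C δ + D) ε) dN(0, σ_θ²)(ε) dN(0, σ_φ²)(δ) = (σ̃ / σ_φ) · exp( D² σ_θ² (C² σ_θ² σ̃² − 1) / 2 ) · exp( −i B C D σ_θ² σ̃² ) · exp( −B² σ̃² / 2 ). -/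
/-!
The inner integral is the characteristic function of `N(0, σθ²)` at `C δ + D`, namely
`exp (i B δ - σθ² (C δ + D)² / 2)`. Its factor `exp (-C² σθ² δ² / 2)` tilts `N(0, σφ²)` into
`(σ̃ / σφ) · N(0, σ̃²)`, since precisions add: `σ̃⁻² = σφ⁻² + C² σθ²`. What remains is the complex
moment generating function of `N(0, σ̃²)` at `z = i B - C D σθ²`, namely `exp (σ̃² z² / 2)`.
-/

open MeasureTheory ProbabilityTheory Real Complex
open scoped NNReal

lemma integral_cexp_mul_gaussianReal (v : ℝ≥0) (z : ℂ) :
    ∫ x, cexp (z * x) ∂gaussianReal 0 v = cexp (v * z ^ 2 / 2) := by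
  simpa [complexMGF] using complexMGF_id_gaussianReal (μ := 0) (v := v) z

lemma gaussianPDFReal_mul_exp_neg_sq {v w : ℝ≥0} (hv : v ≠ 0) (hw : w ≠ 0) {k : ℝ}
    (hk : (w : ℝ)⁻¹ = (v : ℝ)⁻¹ + k) (x : ℝ) :
    gaussianPDFReal 0 v x * rexp (-(k * x ^ 2) / 2) = √w / √v * gaussianPDFReal 0 w x := by
  have hv' : (0 : ℝ) < v := NNReal.coe_pos.mpr (pos_iff_ne_zero.mpr hv)
  have hw' : (0 : ℝ) < w := NNReal.coe_pos.mpr (pos_iff_ne_zero.mpr hw)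
  have hexp : -(x - 0) ^ 2 / (2 * v) + -(k * x ^ 2) / 2 = -(x - 0) ^ 2 / (2 * w) := by
    rw [div_eq_mul_inv _ (2 * (w : ℝ)), mul_inv, hk]
    field_simp
    ring
  rw [gaussianPDFReal, gaussianPDFReal, mul_assoc, ← Real.exp_add, hexp,
    Real.sqrt_mul' _ hv'.le, Real.sqrt_mul' _ hw'.le]
  field_simp

lemma integral_exp_neg_sq_smul_gaussianReal {E : Type*} [NormedAddCommGroup E] [NormedSpace ℝ E]
    {v w : ℝ≥0} (hv : v ≠ 0) (hw : w ≠ 0) {k : ℝ} (hk : (w : ℝ)⁻¹ = (v : ℝ)⁻¹ + k) (f : ℝ → E) :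
    ∫ x, rexp (-(k * x ^ 2) / 2) • f x ∂gaussianReal 0 v
      = (√w / √v) • ∫ x, f x ∂gaussianReal 0 w := by
  simp_rw [integral_gaussianReal_eq_integral_smul hv, integral_gaussianReal_eq_integral_smul hw,
    smul_smul, gaussianPDFReal_mul_exp_neg_sq hv hw hk, ← smul_smul, integral_smul]

theorem stmt11_general (B C D σφ σθ : ℝ) (hφ : 0 < σφ)
    (σt : ℝ) (hσt_pos : 0 < σt)
    (hσt : σt ^ 2 = σφ ^ 2 / (1 + C ^ 2 * σφ ^ 2 * σθ ^ 2)) :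
    (∫ δ : ℝ, (∫ ε : ℝ,
        Complex.exp (Complex.I * ((B * δ : ℝ) : ℂ) + Complex.I * (((C * δ + D) * ε : ℝ) : ℂ))
          ∂(gaussianReal 0 (Real.toNNReal (σθ ^ 2))))
      ∂(gaussianReal 0 (Real.toNNReal (σφ ^ 2))))
    = ((σt / σφ : ℝ) : ℂ)
      * Complex.exp (((D ^ 2 * σθ ^ 2 * (C ^ 2 * σθ ^ 2 * σt ^ 2 - 1) / 2 : ℝ) : ℂ))
      * Complex.exp (-Complex.I * ((B * C * D * σθ ^ 2 * σt ^ 2 : ℝ) : ℂ))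
      * Complex.exp (-((B ^ 2 * σt ^ 2 / 2 : ℝ) : ℂ)) := by
  have hσθ : ((σθ ^ 2).toNNReal : ℝ) = σθ ^ 2 := Real.coe_toNNReal _ (sq_nonneg _)
  have hσφ : ((σφ ^ 2).toNNReal : ℝ) = σφ ^ 2 := Real.coe_toNNReal _ (sq_nonneg _)
  have hσt' : ((σt ^ 2).toNNReal : ℝ) = σt ^ 2 := Real.coe_toNNReal _ (sq_nonneg _)
  have hinner : ∀ δ : ℝ,
      ∫ ε, cexp (I * ((B * δ : ℝ) : ℂ) + I * (((C * δ + D) * ε : ℝ) : ℂ))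
          ∂gaussianReal 0 (σθ ^ 2).toNNReal
        = rexp (-(C ^ 2 * σθ ^ 2 * δ ^ 2) / 2)
          • (cexp (-(D ^ 2 * σθ ^ 2 / 2)) * cexp ((I * B - C * D * σθ ^ 2) * δ)) := by
    intro δ
    have hchar := integral_cexp_mul_gaussianReal (σθ ^ 2).toNNReal (I * (C * δ + D))
    simp_rw [Complex.exp_add, integral_const_mul, push_cast, ← mul_assoc, hchar, hσθ,
      Complex.real_smul, Complex.ofReal_exp, ← Complex.exp_add]
    congr 1
    push_cast
    linear_combination (σθ ^ 2 * (C * δ + D) ^ 2 / 2 : ℂ) * I_sq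
  have hprecision : ((σt ^ 2).toNNReal : ℝ)⁻¹ = ((σφ ^ 2).toNNReal : ℝ)⁻¹ + C ^ 2 * σθ ^ 2 := by
    rw [hσt', hσφ, hσt]
    field_simp
  rw [integral_congr_ae (ae_of_all _ hinner),
    integral_exp_neg_sq_smul_gaussianReal (by positivity) (by positivity) hprecision,
    integral_const_mul, integral_cexp_mul_gaussianReal, hσt', hσφ, Real.sqrt_sq hσt_pos.le,
    Real.sqrt_sq hφ.le, Complex.real_smul]
  simp only [mul_assoc, ← Complex.exp_add]
  congr 2
  push_cast
  linear_combination (σt ^ 2 * B ^ 2 / 2 : ℂ) * I_sq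

/-- Exact evaluation of the double Gaussian integral
`∫∫ exp(i B δ + i (C δ + D) ε) dN(0, σθ²)(ε) dN(0, σφ²)(δ)` underlying the closed-form
approximate spatial correlation matrix of a UPA under the Gaussian local scattering model,
where `σ̃` is the positive square root of `σφ² / (1 + C² σφ² σθ²)`. -/
theorem stmt11 (B C D σφ σθ : ℝ) (hφ : 0 < σφ) (hθ : 0 < σθ)
    (σt : ℝ) (hσt_pos : 0 < σt)
    (hσt : σt ^ 2 = σφ ^ 2 / (1 + C ^ 2 * σφ ^ 2 * σθ ^ 2)) :
    (∫ δ : ℝ, (∫ ε : ℝ,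
        Complex.exp (Complex.I * ((B * δ : ℝ) : ℂ) + Complex.I * (((C * δ + D) * ε : ℝ) : ℂ))
          ∂(gaussianReal 0 (Real.toNNReal (σθ ^ 2))))
      ∂(gaussianReal 0 (Real.toNNReal (σφ ^ 2))))
    = ((σt / σφ : ℝ) : ℂ)
      * Complex.exp (((D ^ 2 * σθ ^ 2 * (C ^ 2 * σθ ^ 2 * σt ^ 2 - 1) / 2 : ℝ) : ℂ))
      * Complex.exp (-Complex.I * ((B * C * D * σθ ^ 2 * σt ^ 2 : ℝ) : ℂ))
      * Complex.exp (-((B ^ 2 * σt ^ 2 / 2 : ℝ) : ℂ)) :=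
  stmt11_general B C D σφ σθ hφ σt hσt_pos hσt
end
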